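/- arXiv:1712.08050 — 4 statements merged into one kernel-verified Lean document; each statement's English description precedes it below -/
import Mathlib

section
/- Let H be a Krein space with fundamental decomposition H = H₊ [∔] H₋ and let C = ½(J_M + J_M⁺) where J_M is associated to a decomposition H = M₊ ∔ M₋ into maximal uniformly definite subspaces. Then C is a bounded, J-self-adjoint, J-positive operator on the Krein space (H, [·,·]) and 0 belongs to the resolvent set of C. -/
noncomputable section
open Filter Topology

namespace KreinStmt

local notation "⟪" x ", " y "⟫" => @inner ℂ _ _ x y

variable {H : Type} [NormedAddCommGroup H] [InnerProductSpace ℂ H] [CompleteSpace H]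

/-- The indefinite inner product `[f,g]` of the Krein space with fundamental symmetry `J`. -/
def indef (J : H →L[ℂ] H) (f g : H) : ℂ := ⟪J f, g⟫

/-- `J` is a fundamental symmetry: a self-adjoint involution on the Hilbert space `H`. -/
def IsFundSym (J : H →L[ℂ] H) : Prop :=
  (∀ f g : H, ⟪J f, g⟫ = ⟪f, J g⟫) ∧ ∀ f : H, J (J f) = f

/-- `M` is a (closed) positive subspace of the Krein space. -/
def IsPos (J : H →L[ℂ] H) (M : Submodule ℂ H) : Prop :=
  IsClosed (M : Set H) ∧ ∀ f ∈ M, f ≠ 0 → 0 < (indef J f f).re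

/-- `M` is a (closed) negative subspace of the Krein space. -/
def IsNeg (J : H →L[ℂ] H) (M : Submodule ℂ H) : Prop :=
  IsClosed (M : Set H) ∧ ∀ f ∈ M, f ≠ 0 → (indef J f f).re < 0

/-- Maximal positive subspace. -/
def IsMaxPos (J : H →L[ℂ] H) (M : Submodule ℂ H) : Prop :=
  IsPos J M ∧ ∀ M' : Submodule ℂ H, IsPos J M' → M ≤ M' → M' = M

/-- Maximal negative subspace. -/
def IsMaxNeg (J : H →L[ℂ] H) (M : Submodule ℂ H) : Prop :=
  IsNeg J M ∧ ∀ M' : Submodule ℂ H, IsNeg J M' → M ≤ M' → M' = M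

/-- Uniformly positive subspace. -/
def IsUnifPos (J : H →L[ℂ] H) (M : Submodule ℂ H) : Prop :=
  IsClosed (M : Set H) ∧ ∃ α > (0:ℝ), ∀ f ∈ M, α * ‖f‖ ^ 2 ≤ (indef J f f).re

/-- Uniformly negative subspace. -/
def IsUnifNeg (J : H →L[ℂ] H) (M : Submodule ℂ H) : Prop :=
  IsClosed (M : Set H) ∧ ∃ α > (0:ℝ), ∀ f ∈ M, α * ‖f‖ ^ 2 ≤ -(indef J f f).re

/-- Maximal uniformly positive subspace. -/
def IsMaxUnifPos (J : H →L[ℂ] H) (M : Submodule ℂ H) : Prop :=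
  IsUnifPos J M ∧ ∀ M' : Submodule ℂ H, IsUnifPos J M' → M ≤ M' → M' = M

/-- Maximal uniformly negative subspace. -/
def IsMaxUnifNeg (J : H →L[ℂ] H) (M : Submodule ℂ H) : Prop :=
  IsUnifNeg J M ∧ ∀ M' : Submodule ℂ H, IsUnifNeg J M' → M ≤ M' → M' = M

/-- Two subspaces are `J`-orthogonal. -/
def JOrth (J : H →L[ℂ] H) (M N : Submodule ℂ H) : Prop :=
  ∀ f ∈ M, ∀ g ∈ N, indef J f g = 0

/-- Indices of nonnegative vectors of the family. -/
def Npos (J : H →L[ℂ] H) (F : ℕ → H) : Set ℕ := {n | 0 ≤ (indef J (F n) (F n)).re}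

/-- Indices of negative vectors of the family. -/
def Nneg (J : H →L[ℂ] H) (F : ℕ → H) : Set ℕ := {n | (indef J (F n) (F n)).re < 0}

/-- `M₊`: closed span of the nonnegative vectors of the family. -/
def Mpos (J : H →L[ℂ] H) (F : ℕ → H) : Submodule ℂ H :=
  (Submodule.span ℂ (F '' Npos J F)).topologicalClosure

/-- `M₋`: closed span of the negative vectors of the family. -/
def Mneg (J : H →L[ℂ] H) (F : ℕ → H) : Submodule ℂ H :=
  (Submodule.span ℂ (F '' Nneg J F)).topologicalClosure

/-- `J`-frame in the sense of Definition 3 of the paper, with frame bounds `A ≤ B`. -/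
def IsJFrame (J : H →L[ℂ] H) (F : ℕ → H) (A B : ℝ) : Prop :=
  0 < A ∧ A ≤ B ∧ IsMaxPos J (Mpos J F) ∧ IsMaxNeg J (Mneg J F) ∧
  (∀ f ∈ Submodule.span ℂ (F '' Npos J F),
    A * |(indef J f f).re| ≤ ∑' n : Npos J F, ‖indef J f (F ↑n)‖ ^ 2 ∧
    ∑' n : Npos J F, ‖indef J f (F ↑n)‖ ^ 2 ≤ B * |(indef J f f).re|) ∧
  (∀ f ∈ Submodule.span ℂ (F '' Nneg J F),
    A * |(indef J f f).re| ≤ ∑' n : Nneg J F, ‖indef J f (F ↑n)‖ ^ 2 ∧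
    ∑' n : Nneg J F, ‖indef J f (F ↑n)‖ ^ 2 ≤ B * |(indef J f f).re|)


/-! Write `f = p + m` with `p ∈ M₊`, `m ∈ M₋`. Since `J_M⁺` is the `[·,·]`-adjoint of `J_M`,
`Re [C f, f] = Re [J_M f, f] = [p, p] - [m, m] ≥ α ‖p‖² + β ‖m‖² ≥ (min α β / 2) ‖f‖²`.
Hence `J C`, whose Hilbert quadratic form is `[C f, f]`, is coercive and therefore invertible,
and so is `C = J (J C)`. Boundedness: `J_M = P₊ - P₋` for the projections along the closed
complementary subspaces `M±`, and `J_M⁺ = J (J J_M)* J`. -/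

theorem _root_.Submodule.IsTopCompl.continuous_of_map_add_eq_sub {R M : Type*} [Ring R]
    [TopologicalSpace M] [AddCommGroup M] [IsTopologicalAddGroup M] [Module R M]
    {p q : Submodule R M} (h : p.IsTopCompl q) (A : M →ₗ[R] M)
    (hA : ∀ x ∈ p, ∀ y ∈ q, A (x + y) = x - y) : Continuous A := by
  have hA' : ⇑A = fun x ↦ p.projectionL q h x - q.projectionL p h.symm x := by
    funext x
    conv_lhs => rw [← Submodule.projectionL_add_projectionL_eq_self h x]
    exact hA _ (Submodule.projectionL_apply_mem h x) _ (Submodule.projectionL_apply_mem h.symm x)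
  rw [hA']
  fun_prop

section FundamentalSymmetry

variable {J : H →L[ℂ] H} {A B : H →ₗ[ℂ] H}

omit [CompleteSpace H] in
theorem indef_conj_symm (hJ : IsFundSym J) (f g : H) :
    indef J f g = starRingEnd ℂ (indef J g f) := by
  rw [indef, indef, inner_conj_symm, hJ.1]

omit [CompleteSpace H] in
theorem indef_map_eq_of_adjoint (hJ : IsFundSym J)
    (hAB : ∀ f g, indef J (A f) g = indef J f (B g)) (f g : H) :
    indef J (B f) g = indef J f (A g) := by
  rw [indef_conj_symm hJ, ← hAB, ← indef_conj_symm hJ]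

omit [CompleteSpace H] in
theorem indef_half_add_symm (hJ : IsFundSym J)
    (hAB : ∀ f g, indef J (A f) g = indef J f (B g)) (f g : H) :
    indef J ((((1 : ℂ) / 2) • (A + B)) f) g = indef J f ((((1 : ℂ) / 2) • (A + B)) g) := by
  have hA := hAB f g
  have hB := indef_map_eq_of_adjoint hJ hAB f g
  simp only [indef, LinearMap.smul_apply, LinearMap.add_apply, map_smul, map_add,
    inner_smul_left, inner_smul_right, inner_add_left, inner_add_right] at hA hB ⊢
  rw [hA, hB, add_comm, map_div₀, map_one, Complex.conj_ofNat]

omit [CompleteSpace H] in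
theorem re_indef_half_add_self (hJ : IsFundSym J)
    (hAB : ∀ f g, indef J (A f) g = indef J f (B g)) (f : H) :
    (indef J ((((1 : ℂ) / 2) • (A + B)) f) f).re = (indef J (A f) f).re := by
  have hB : indef J (B f) f = starRingEnd ℂ (indef J (A f) f) := by
    rw [indef_map_eq_of_adjoint hJ hAB, indef_conj_symm hJ]
  simp only [indef, LinearMap.smul_apply, LinearMap.add_apply, map_smul, map_add,
    inner_smul_left, inner_add_left] at hB ⊢
  rw [hB, Complex.add_conj, map_div₀, map_one, Complex.conj_ofNat]
  simp

theorem continuous_of_indef_adjoint (hJ : IsFundSym J) (hA : Continuous A)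
    (hAB : ∀ f g, indef J (A f) g = indef J f (B g)) : Continuous B := by
  set T : H →L[ℂ] H := J ∘L ⟨A, hA⟩
  have hJB : ∀ g, J (B g) = T.adjoint g := fun g ↦ ext_inner_left ℂ fun f ↦ by
    rw [ContinuousLinearMap.adjoint_inner_right, ← hJ.1]
    exact (hAB f g).symm
  have hB : ⇑B = J ∘ T.adjoint := funext fun g ↦ by
    rw [Function.comp_apply, ← hJB, hJ.2]
  rw [hB]
  fun_prop

omit [CompleteSpace H] in
theorem re_indef_sub_add (hJ : IsFundSym J) (p m : H) :
    (indef J (p - m) (p + m)).re = (indef J p p).re - (indef J m m).re := by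
  have hmp : (indef J m p).re = (indef J p m).re := by
    rw [indef_conj_symm hJ, Complex.conj_re]
  simp only [indef, map_sub, inner_sub_left, inner_add_right, Complex.sub_re,
    Complex.add_re] at hmp ⊢
  linarith

omit [CompleteSpace H] in
theorem exists_coercive_of_isUnifPos_of_isUnifNeg (hJ : IsFundSym J)
    {Mp Mn : Submodule ℂ H} (hMp : IsUnifPos J Mp) (hMn : IsUnifNeg J Mn) (hsum : Mp ⊔ Mn = ⊤)
    (hA : ∀ p ∈ Mp, ∀ m ∈ Mn, A (p + m) = p - m) :
    ∃ c > 0, ∀ f, c * ‖f‖ ^ 2 ≤ (indef J (A f) f).re := by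
  obtain ⟨-, α, hα, hαp⟩ := hMp
  obtain ⟨-, β, hβ, hβm⟩ := hMn
  refine ⟨min α β / 2, by positivity, fun f ↦ ?_⟩
  obtain ⟨p, hp, m, hm, rfl⟩ := Submodule.mem_sup.1 (hsum ▸ Submodule.mem_top : f ∈ Mp ⊔ Mn)
  have hpm : ‖p + m‖ ^ 2 ≤ 2 * (‖p‖ ^ 2 + ‖m‖ ^ 2) :=
    (pow_le_pow_left₀ (norm_nonneg _) (norm_add_le p m) 2).trans add_sq_le
  rw [hA p hp m hm, re_indef_sub_add hJ]
  calc min α β / 2 * ‖p + m‖ ^ 2 ≤ min α β * ‖p‖ ^ 2 + min α β * ‖m‖ ^ 2 := by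
        nlinarith [le_min hα.le hβ.le]
    _ ≤ α * ‖p‖ ^ 2 + β * ‖m‖ ^ 2 := by
        gcongr
        exacts [min_le_left α β, min_le_right α β]
    _ ≤ _ := by linarith [hαp p hp, hβm m hm]

theorem exists_inverse_of_coercive (hJ : IsFundSym J) (C : H →L[ℂ] H) {c : ℝ}
    (hc : 0 < c) (hC : ∀ f, c * ‖f‖ ^ 2 ≤ (indef J (C f) f).re) :
    ∃ Ci : H →L[ℂ] H, (∀ f, Ci (C f) = f) ∧ ∀ f, C (Ci f) = f := by
  have hJC : IsUnit (J ∘L C) := by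
    refine ContinuousLinearMap.isUnit_of_forall_le_norm_inner_map _ (c := ⟨c, hc.le⟩) hc
      fun f ↦ ?_
    rw [mul_comm]
    exact (hC f).trans (Complex.re_le_norm _)
  obtain ⟨u, hu⟩ := hJC
  have hu_inv : ∀ g, (↑u⁻¹ : H →L[ℂ] H) (J (C g)) = g := fun g ↦ by
    rw [← ContinuousLinearMap.comp_apply J C, ← hu, ← mul_apply_eq_comp, u.inv_mul,
      one_apply_eq_self]
  have hinv_u : ∀ g, J (C ((↑u⁻¹ : H →L[ℂ] H) g)) = g := fun g ↦ by
    rw [← ContinuousLinearMap.comp_apply J C, ← hu, ← mul_apply_eq_comp, u.mul_inv,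
      one_apply_eq_self]
  refine ⟨(↑u⁻¹ : H →L[ℂ] H) ∘L J, hu_inv, fun f ↦ ?_⟩
  rw [← hJ.2 (C _), ContinuousLinearMap.comp_apply, hinv_u, hJ.2]

end FundamentalSymmetry

/-- `C = ½(J_M + J_M⁺)` is bounded, J-self-adjoint, J-positive,
and `0 ∈ ρ(C)`. -/
theorem stmt1 (J : H →L[ℂ] H) (hJ : IsFundSym J)
    (Mp Mn : Submodule ℂ H) (hMp : IsMaxUnifPos J Mp) (hMn : IsMaxUnifNeg J Mn)
    (hsum : Mp ⊔ Mn = ⊤) (hdis : Mp ⊓ Mn = ⊥)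
    (JM JMadj : H →ₗ[ℂ] H)
    (hJM : ∀ p ∈ Mp, ∀ m ∈ Mn, JM (p + m) = p - m)
    (hadj : ∀ f g : H, indef J (JM f) g = indef J f (JMadj g))
    (C : H →ₗ[ℂ] H) (hC : C = ((1:ℂ)/2) • (JM + JMadj)) :
    Continuous C ∧
    (∀ f g : H, indef J (C f) g = indef J f (C g)) ∧
    (∀ f : H, f ≠ 0 → 0 < (indef J (C f) f).re) ∧
    ∃ Ci : H →L[ℂ] H, (∀ f, Ci (C f) = f) ∧ (∀ f, C (Ci f) = f) := by
  subst hC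
  have hMpMn : Mp.IsTopCompl Mn := Submodule.IsCompl.isTopCompl_of_isClosed
    ⟨disjoint_iff.2 hdis, codisjoint_iff.2 hsum⟩ hMp.1.1 hMn.1.1
  have hJMc : Continuous JM := hMpMn.continuous_of_map_add_eq_sub JM hJM
  have hCc : Continuous (((1 : ℂ) / 2) • (JM + JMadj)) := by
    show Continuous fun f ↦ ((1 : ℂ) / 2) • (JM f + JMadj f)
    exact (hJMc.add (continuous_of_indef_adjoint hJ hJMc hadj)).const_smul _
  obtain ⟨c, hc, hcoer⟩ := exists_coercive_of_isUnifPos_of_isUnifNeg hJ hMp.1 hMn.1 hsum hJM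
  simp only [← re_indef_half_add_self hJ hadj] at hcoer
  refine ⟨hCc, indef_half_add_symm hJ hadj, fun f hf ↦ ?_,
    exists_inverse_of_coercive hJ ⟨_, hCc⟩ hc hcoer⟩
  exact (by positivity : 0 < c * ‖f‖ ^ 2).trans_le (hcoer f)
end KreinStmt
end
end

section
/- Let (H, [·,·]) be a Krein space with fundamental symmetry J, and let F = {f_n} be a J-frame in the sense that the subspaces M± = closure of span{f_n : sgn[f_n,f_n] = ±} are maximal definite and A|[f,f]| ≤ Σ_{n∈N±} |[f,f_n]|² ≤ B|[f,f]| holds for all f in span{F±} for constants 0 < A ≤ B. If the direct sum D = M₊ ∔ M₋ equals H, then F is a conventional frame in the Hilbert space (H, (·,·)₁) with the same frame bounds A ≤ B, where (f,g)₁ = [f₊,g₊] − [f₋,g₋]. -/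
noncomputable section
open Filter Topology

namespace KreinStmt

local notation "⟪" x ", " y "⟫" => @inner ℂ _ _ x y

variable {H : Type} [NormedAddCommGroup H] [InnerProductSpace ℂ H] [CompleteSpace H]

/-!
On `M₊` the projection `P` is the identity and on `M₋` it vanishes, so `(f, f_n)₁` equals
`[f₊, f_n]` for `n ∈ N₊` and `-[f₋, f_n]` for `n ∈ N₋`, while `(f, f)₁ = |[f₊, f₊]| + |[f₋, f₋]|`.
Hence the frame sum of `f` in `(H, (·,·)₁)` splits into the two `J`-frame sums at `f₊ ∈ M₊` and
`f₋ ∈ M₋`. The `J`-frame inequalities are only assumed on the spans of `F±`; they extend to the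
closures `M±` because the upper bound makes `f ↦ (∑ |[f, f_n]|²)^(1/2)` a seminorm dominated by a
multiple of the norm, hence continuous, and `M±` are definite, so the lower bound forces
summability on the spans.
-/

section
omit [CompleteSpace H]

variable {ι : Type*}

lemma indef_add_left (J : H →L[ℂ] H) (f g h : H) :
    indef J (f + g) h = indef J f h + indef J g h := by
  simp only [indef, map_add, inner_add_left]

@[fun_prop]
lemma continuous_indef_left (J : H →L[ℂ] H) (h : H) : Continuous fun g => indef J g h :=
  J.continuous.inner continuous_const

@[fun_prop]
lemma continuous_indef_self (J : H →L[ℂ] H) : Continuous fun g => indef J g g :=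
  J.continuous.inner continuous_id

lemma abs_re_indef_self_le (J : H →L[ℂ] H) (g : H) : |(indef J g g).re| ≤ ‖J‖ * ‖g‖ ^ 2 :=
  calc |(indef J g g).re| ≤ ‖indef J g g‖ := Complex.abs_re_le_norm _
    _ ≤ ‖J g‖ * ‖g‖ := norm_inner_le_norm _ _
    _ ≤ ‖J‖ * ‖g‖ * ‖g‖ := by gcongr; exact J.le_opNorm g
    _ = ‖J‖ * ‖g‖ ^ 2 := by ring

def frameSum (J : H →L[ℂ] H) (v : ι → H) (g : H) : ℝ := ∑' i, ‖indef J g (v i)‖ ^ 2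

section FrameSum

variable (J : H →L[ℂ] H) (v : ι → H)

lemma frameSum_nonneg (g : H) : 0 ≤ frameSum J v g :=
  tsum_nonneg fun _ => sq_nonneg _

lemma sqrt_frameSum_add_le {g h : H} (hg : Summable fun i => ‖indef J g (v i)‖ ^ 2)
    (hh : Summable fun i => ‖indef J h (v i)‖ ^ 2) :
    √(frameSum J v (g + h)) ≤ √(frameSum J v g) + √(frameSum J v h) := by
  obtain ⟨hsum, hle⟩ := Real.Lp_add_le_tsum_of_nonneg (p := 2) one_le_two
    (fun i => norm_nonneg (indef J g (v i))) (fun i => norm_nonneg (indef J h (v i)))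
    (by simpa using hg) (by simpa using hh)
  simp only [Real.rpow_two, ← Real.sqrt_eq_rpow] at hsum hle
  have hpt : ∀ i, ‖indef J (g + h) (v i)‖ ^ 2 ≤ (‖indef J g (v i)‖ + ‖indef J h (v i)‖) ^ 2 :=
    fun i => by rw [indef_add_left]; gcongr; exact norm_add_le _ _
  calc √(frameSum J v (g + h))
      ≤ √(∑' i, (‖indef J g (v i)‖ + ‖indef J h (v i)‖) ^ 2) :=
        Real.sqrt_le_sqrt <|
          Summable.tsum_le_tsum hpt (hsum.of_nonneg_of_le (fun _ => sq_nonneg _) hpt) hsum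
    _ ≤ √(frameSum J v g) + √(frameSum J v h) := hle

variable {S : Submodule ℂ H} {A B : ℝ}

lemma summable_of_frame_lower_bound (hA : 0 < A) {f : H} (hf : (indef J f f).re ≠ 0)
    (hlow : A * |(indef J f f).re| ≤ frameSum J v f) :
    Summable fun i => ‖indef J f (v i)‖ ^ 2 := by
  by_contra hns
  rw [frameSum, tsum_eq_zero_of_not_summable hns] at hlow
  have : 0 < A * |(indef J f f).re| := by positivity
  linarith

lemma frame_upper_bound_closure
    (hS : ∀ f ∈ S, (Summable fun i => ‖indef J f (v i)‖ ^ 2) ∧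
      frameSum J v f ≤ B * |(indef J f f).re|) :
    ∀ g ∈ S.topologicalClosure, (Summable fun i => ‖indef J g (v i)‖ ^ 2) ∧
      frameSum J v g ≤ B * |(indef J g g).re| := by
  have hfin : ∀ g ∈ S.topologicalClosure, ∀ s : Finset ι,
      ∑ i ∈ s, ‖indef J g (v i)‖ ^ 2 ≤ B * |(indef J g g).re| := by
    intro g hg s
    have hclosed : IsClosed {g : H | ∑ i ∈ s, ‖indef J g (v i)‖ ^ 2 ≤ B * |(indef J g g).re|} :=
      isClosed_le (by fun_prop) (by fun_prop)
    refine hclosed.closure_subset_iff.mpr (fun f hf => ?_)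
      (S.topologicalClosure_coe ▸ hg : g ∈ closure (S : Set H))
    exact ((hS f hf).1.sum_le_tsum s fun _ _ => sq_nonneg _).trans (hS f hf).2
  exact fun g hg => ⟨summable_of_sum_le (fun _ => sq_nonneg _) (hfin g hg),
    Real.tsum_le_of_sum_le (fun _ => sq_nonneg _) (hfin g hg)⟩

/-- The upper frame bound makes `√(frameSum J v)` a seminorm on `S̄` dominated by `√(B ‖J‖) ‖·‖`. -/
lemma continuousOn_frameSum (hB : 0 ≤ B)
    (hS : ∀ f ∈ S, (Summable fun i => ‖indef J f (v i)‖ ^ 2) ∧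
      frameSum J v f ≤ B * |(indef J f f).re|) :
    ContinuousOn (frameSum J v) S.topologicalClosure := by
  have hup := frame_upper_bound_closure J v hS
  have hbound : ∀ g ∈ S.topologicalClosure, √(frameSum J v g) ≤ √(B * ‖J‖) * ‖g‖ := fun g hg =>
    calc √(frameSum J v g) ≤ √(B * ‖J‖ * ‖g‖ ^ 2) := Real.sqrt_le_sqrt <|
          (hup g hg).2.trans <| by rw [mul_assoc]; gcongr; exact abs_re_indef_self_le J g
      _ = √(B * ‖J‖) * ‖g‖ := by
        rw [Real.sqrt_mul (by positivity), Real.sqrt_sq (norm_nonneg _)]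
  have hlip : LipschitzOnWith (Real.toNNReal √(B * ‖J‖)) (fun g => √(frameSum J v g))
      S.topologicalClosure := by
    refine LipschitzOnWith.of_dist_le_mul fun g hg h hh => ?_
    have hgh := sub_mem hg hh
    have hhg := sub_mem hh hg
    have h₁ := sqrt_frameSum_add_le J v (hup h hh).1 (hup _ hgh).1
    have h₂ := sqrt_frameSum_add_le J v (hup g hg).1 (hup _ hhg).1
    rw [add_sub_cancel] at h₁ h₂
    rw [Real.coe_toNNReal _ (Real.sqrt_nonneg _), Real.dist_eq, dist_eq_norm, abs_sub_le_iff]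
    have h₃ := hbound _ hgh
    have h₄ := hbound _ hhg
    rw [norm_sub_rev] at h₄
    constructor <;> linarith
  have hsq : frameSum J v = fun g => √(frameSum J v g) ^ 2 :=
    funext fun g => (Real.sq_sqrt (frameSum_nonneg J v g)).symm
  rw [hsq]
  exact hlip.continuousOn.pow 2

lemma frame_bounds_closure (hA : 0 < A) (hB : 0 ≤ B)
    (hdef : ∀ f ∈ S, f ≠ 0 → (indef J f f).re ≠ 0)
    (hS : ∀ f ∈ S, A * |(indef J f f).re| ≤ frameSum J v f ∧
      frameSum J v f ≤ B * |(indef J f f).re|) :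
    ∀ g ∈ S.topologicalClosure, (Summable fun i => ‖indef J g (v i)‖ ^ 2) ∧
      A * |(indef J g g).re| ≤ frameSum J v g ∧ frameSum J v g ≤ B * |(indef J g g).re| := by
  have hS' : ∀ f ∈ S, (Summable fun i => ‖indef J f (v i)‖ ^ 2) ∧
      frameSum J v f ≤ B * |(indef J f f).re| := by
    refine fun f hf => ⟨?_, (hS f hf).2⟩
    by_cases hf0 : f = 0
    · simp [hf0, indef]
    · exact summable_of_frame_lower_bound J v hA (hdef f hf hf0) (hS f hf).1
  have hclosed : IsClosed {g ∈ (S.topologicalClosure : Set H) |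
      A * |(indef J g g).re| ≤ frameSum J v g} :=
    S.isClosed_topologicalClosure.isClosed_le (Continuous.continuousOn (by fun_prop))
      (continuousOn_frameSum J v hB hS')
  have hlow : ∀ g ∈ S.topologicalClosure, A * |(indef J g g).re| ≤ frameSum J v g := fun g hg =>
    (hclosed.closure_subset_iff.mpr (fun f hf => ⟨S.le_topologicalClosure hf, (hS f hf).1⟩)
      (S.topologicalClosure_coe ▸ hg : g ∈ closure (S : Set H))).2
  intro g hg
  obtain ⟨hsum, hup⟩ := frame_upper_bound_closure J v hS' g hg
  exact ⟨hsum, hlow g hg, hup⟩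

end FrameSum

section Decomposition

variable {R M : Type*} [Ring R] [AddCommGroup M] [Module R M] {V W : Submodule R M}
  {P : M →ₗ[R] M}

lemma proj_apply_of_mem_left (hVW : Disjoint V W) (hPV : ∀ f, P f ∈ V) (hPW : ∀ f, f - P f ∈ W)
    {g : M} (hg : g ∈ V) : P g = g :=
  (sub_eq_zero.mp (Submodule.disjoint_def.mp hVW _ (sub_mem hg (hPV g)) (hPW g))).symm

lemma proj_apply_of_mem_right (hVW : Disjoint V W) (hPV : ∀ f, P f ∈ V)
    (hPW : ∀ f, f - P f ∈ W) {g : M} (hg : g ∈ W) : P g = 0 :=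
  Submodule.disjoint_def.mp hVW _ (hPV g) (by simpa using sub_mem hg (hPW g))

end Decomposition

lemma IsPos.re_indef_self_nonneg {J : H →L[ℂ] H} {M : Submodule ℂ H} (hM : IsPos J M) {f : H}
    (hf : f ∈ M) : 0 ≤ (indef J f f).re := by
  rcases eq_or_ne f 0 with rfl | hf0
  · simp [indef]
  · exact (hM.2 f hf hf0).le

lemma IsNeg.re_indef_self_nonpos {J : H →L[ℂ] H} {M : Submodule ℂ H} (hM : IsNeg J M) {f : H}
    (hf : f ∈ M) : (indef J f f).re ≤ 0 := by
  rcases eq_or_ne f 0 with rfl | hf0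
  · simp [indef]
  · exact (hM.2 f hf hf0).le

/-- The paper's `(f, g)₁ = [f₊, g₊] - [f₋, g₋]` for the decomposition `f = P f + (f - P f)`. -/
def decompInner (J : H →L[ℂ] H) (P : H →ₗ[ℂ] H) (f g : H) : ℂ :=
  indef J (P f) (P g) - indef J (f - P f) (g - P g)

section DecompInner

variable {J : H →L[ℂ] H} {V W : Submodule ℂ H} {P : H →ₗ[ℂ] H}
  (hVW : Disjoint V W) (hPV : ∀ f, P f ∈ V) (hPW : ∀ f, f - P f ∈ W)
include hVW hPV hPW

lemma decompInner_of_mem_left (f : H) {g : H} (hg : g ∈ V) :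
    decompInner J P f g = indef J (P f) g := by
  simp [decompInner, proj_apply_of_mem_left hVW hPV hPW hg, indef]

lemma decompInner_of_mem_right (f : H) {g : H} (hg : g ∈ W) :
    decompInner J P f g = -indef J (f - P f) g := by
  simp [decompInner, proj_apply_of_mem_right hVW hPV hPW hg, indef]

end DecompInner

lemma re_decompInner_self {J : H →L[ℂ] H} {V W : Submodule ℂ H} {P : H →ₗ[ℂ] H}
    (hV : IsPos J V) (hW : IsNeg J W) (hPV : ∀ f, P f ∈ V) (hPW : ∀ f, f - P f ∈ W) (f : H) :
    (decompInner J P f f).re =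
      |(indef J (P f) (P f)).re| + |(indef J (f - P f) (f - P f)).re| := by
  rw [decompInner, Complex.sub_re, abs_of_nonneg (hV.re_indef_self_nonneg (hPV f)),
    abs_of_nonpos (hW.re_indef_self_nonpos (hPW f))]
  ring

lemma mem_Mpos {J : H →L[ℂ] H} {F : ℕ → H} {n : ℕ} (hn : n ∈ Npos J F) : F n ∈ Mpos J F :=
  Submodule.le_topologicalClosure _ (Submodule.subset_span ⟨n, hn, rfl⟩)

lemma mem_Mneg {J : H →L[ℂ] H} {F : ℕ → H} {n : ℕ} (hn : n ∈ Nneg J F) : F n ∈ Mneg J F :=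
  Submodule.le_topologicalClosure _ (Submodule.subset_span ⟨n, hn, rfl⟩)

lemma compl_Npos (J : H →L[ℂ] H) (F : ℕ → H) : (Npos J F)ᶜ = Nneg J F := by
  ext n
  simp [Npos, Nneg]

lemma tsum_norm_decompInner_sq {J : H →L[ℂ] H} {F : ℕ → H} {P : H →ₗ[ℂ] H}
    (hMN : Disjoint (Mpos J F) (Mneg J F)) (hPM : ∀ f, P f ∈ Mpos J F)
    (hPN : ∀ f, f - P f ∈ Mneg J F) {f : H}
    (hpos : Summable fun n : Npos J F => ‖indef J (P f) (F n)‖ ^ 2)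
    (hneg : Summable fun n : Nneg J F => ‖indef J (f - P f) (F n)‖ ^ 2) :
    ∑' n, ‖decompInner J P f (F n)‖ ^ 2 =
      frameSum J (fun n : Npos J F => F n) (P f) +
        frameSum J (fun n : Nneg J F => F n) (f - P f) := by
  have htermPos : ∀ n : Npos J F, ‖decompInner J P f (F n)‖ ^ 2 = ‖indef J (P f) (F n)‖ ^ 2 :=
    fun n => by rw [decompInner_of_mem_left hMN hPM hPN f (mem_Mpos n.2)]
  have htermNeg : ∀ n : Nneg J F, ‖decompInner J P f (F n)‖ ^ 2 = ‖indef J (f - P f) (F n)‖ ^ 2 :=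
    fun n => by rw [decompInner_of_mem_right hMN hPM hPN f (mem_Mneg n.2), norm_neg]
  rw [← Summable.tsum_add_tsum_compl (s := Npos J F)
    (f := fun n => ‖decompInner J P f (F n)‖ ^ 2) (hpos.congr fun n => (htermPos n).symm)
    (by rw [compl_Npos]; exact hneg.congr fun n => (htermNeg n).symm), compl_Npos]
  simp only [frameSum, htermPos, htermNeg]

end

theorem stmt3_general (J : H →L[ℂ] H)
    (F : ℕ → H) (A B : ℝ) (hF : IsJFrame J F A B)
    (hdis : Mpos J F ⊓ Mneg J F = ⊥)
    (P : H →ₗ[ℂ] H) (hP1 : ∀ f : H, P f ∈ Mpos J F)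
    (hP2 : ∀ f : H, f - P f ∈ Mneg J F) :
    ∀ f : H,
      A * (indef J (P f) (P f) - indef J (f - P f) (f - P f)).re ≤
        ∑' n : ℕ, ‖indef J (P f) (P (F n)) - indef J (f - P f) (F n - P (F n))‖ ^ 2 ∧
      ∑' n : ℕ, ‖indef J (P f) (P (F n)) - indef J (f - P f) (F n - P (F n))‖ ^ 2 ≤
        B * (indef J (P f) (P f) - indef J (f - P f) (f - P f)).re := by
  obtain ⟨hA, hAB, hMpos, hMneg, hFpos, hFneg⟩ := hF
  have hB : 0 ≤ B := hA.le.trans hAB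
  intro f
  obtain ⟨hsumPos, hlowPos, hupPos⟩ := frame_bounds_closure J (fun n : Npos J F => F n) hA hB
    (fun g hg hg0 => (hMpos.1.2 g (Submodule.le_topologicalClosure _ hg) hg0).ne') hFpos
    (P f) (hP1 f)
  obtain ⟨hsumNeg, hlowNeg, hupNeg⟩ := frame_bounds_closure J (fun n : Nneg J F => F n) hA hB
    (fun g hg hg0 => (hMneg.1.2 g (Submodule.le_topologicalClosure _ hg) hg0).ne) hFneg
    (f - P f) (hP2 f)
  change A * (decompInner J P f f).re ≤ ∑' n, ‖decompInner J P f (F n)‖ ^ 2 ∧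
    ∑' n, ‖decompInner J P f (F n)‖ ^ 2 ≤ B * (decompInner J P f f).re
  rw [tsum_norm_decompInner_sq (disjoint_iff.mpr hdis) hP1 hP2 hsumPos hsumNeg,
    re_decompInner_self hMpos.1 hMneg.1 hP1 hP2, mul_add, mul_add]
  exact ⟨add_le_add hlowPos hlowNeg, add_le_add hupPos hupNeg⟩

/-- Proposition 1: if `D = M₊ ∔ M₋ = H`, then a `J`-frame is a
conventional frame in the Hilbert space `(H, (·,·)₁)` with the same bounds.
The decomposition projection onto `M₊` along `M₋` is encoded by `P`, and
`(f,g)₁ = [P f, P g] - [f - P f, g - P g]`. -/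
theorem stmt3 (J : H →L[ℂ] H) (hJ : IsFundSym J)
    (F : ℕ → H) (A B : ℝ) (hF : IsJFrame J F A B)
    (hsum : Mpos J F ⊔ Mneg J F = ⊤) (hdis : Mpos J F ⊓ Mneg J F = ⊥)
    (P : H →ₗ[ℂ] H) (hP1 : ∀ f : H, P f ∈ Mpos J F)
    (hP2 : ∀ f : H, f - P f ∈ Mneg J F) :
    ∀ f : H,
      A * (indef J (P f) (P f) - indef J (f - P f) (f - P f)).re ≤
        ∑' n : ℕ, ‖indef J (P f) (P (F n)) - indef J (f - P f) (F n - P (F n))‖ ^ 2 ∧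
      ∑' n : ℕ, ‖indef J (P f) (P (F n)) - indef J (f - P f) (F n - P (F n))‖ ^ 2 ≤
        B * (indef J (P f) (P f) - indef J (f - P f) (f - P f)).re :=
  stmt3_general J F A B hF hdis P hP1 hP2

end KreinStmt
end
end

section
/- Let {g_n} be a frame in the Hilbert space (H, (·,·)) such that each g_n lies in H₊ or in H₋ (the fundamental decomposition subspaces), and suppose Q is a self-adjoint operator in H anticommuting with J such that each g_n ∈ D(cosh(Q/2)) and the set {cosh(Q/2) g_n} is complete in H. Then {e^{−Q/2} g_n} is a J-frame in the Krein space (H, [·,·]). -/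
/-!
Write `T = tanh(Q/2)`; it is a strict contraction (`‖Tw‖² + ‖sech(Q/2) w‖² = ‖w‖²`) that swaps
`H₊` and `H₋`. For `w ∈ H₊` this gives `[w - Tw, w - Tw] = ‖w‖² - ‖Tw‖² > 0`, so the graph
`(I - T) H₊` is positive, and it is maximal: if `f` lies in a positive extension, then
`f - (I - T) P₊ f` lies in that extension and in `H₋`, hence vanishes. Since
`e^{-Q/2} = (I - T) cosh(Q/2)` and `{cosh(Q/2) gₙ}` is complete, this graph is the closed span of
the `e^{-Q/2} gₙ` with `gₙ ∈ H₊`; likewise for `H₋`. Finally `[e^{-Q/2} u, e^{-Q/2} v] = (Ju, v)`,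
so on these spans the `J`-frame inequalities are the frame inequalities of `{gₙ}` at some
`u ∈ H±`, where only the `gₙ ∈ H±` contribute.
-/

noncomputable section
open Filter Topology

namespace KreinStmt

local notation "⟪" x ", " y "⟫" => @inner ℂ _ _ x y

variable {H : Type} [NormedAddCommGroup H] [InnerProductSpace ℂ H] [CompleteSpace H]

end KreinStmt

namespace KreinStmt

local notation "⟪" x ", " y "⟫" => @inner ℂ _ _ x y

variable {H : Type} [NormedAddCommGroup H] [InnerProductSpace ℂ H]

def IsFrameOn (K : H →L[ℂ] H) (F : ℕ → H) (S : Set ℕ) (A B : ℝ) : Prop :=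
  ∀ f ∈ Submodule.span ℂ (F '' S),
    A * |(indef K f f).re| ≤ ∑' n : S, ‖indef K f (F ↑n)‖ ^ 2 ∧
    ∑' n : S, ‖indef K f (F ↑n)‖ ^ 2 ≤ B * |(indef K f f).re|

theorem re_inner_add_sub (x y : H) : (⟪x + y, x - y⟫).re = ‖x‖ ^ 2 - ‖y‖ ^ 2 := by
  rw [inner_add_left, inner_sub_right, inner_sub_right, ← RCLike.re_to_complex]
  simp only [map_add, map_sub, inner_self_eq_norm_sq]
  rw [inner_re_symm (𝕜 := ℂ) y x]
  ring

theorem denseRange_of_dense_span_range {E : Type*} [AddCommGroup E] [Module ℂ E] (L : E →ₗ[ℂ] H)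
    {v : ℕ → E} (hv : Dense (Submodule.span ℂ (Set.range fun n => L (v n)) : Set H)) :
    DenseRange L :=
  hv.mono <| (Submodule.span_le (p := LinearMap.range L)).2
    (Set.range_subset_iff.2 fun n => LinearMap.mem_range_self L (v n))

theorem map_mem_closure_span (L : H →L[ℂ] H) {s t : Set H}
    (hst : ∀ x ∈ s, L x ∈ Submodule.span ℂ t) {w : H}
    (hw : w ∈ closure (Submodule.span ℂ s : Set H)) :
    L w ∈ closure (Submodule.span ℂ t : Set H) :=
  map_mem_closure L.continuous hw fun _ hx =>
    (Submodule.span_le (p := (Submodule.span ℂ t).comap L.toLinearMap)).2 hst hx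

section FundSym

variable {J : H →L[ℂ] H}

theorem IsFundSym.neg (hJ : IsFundSym J) : IsFundSym (-J) :=
  ⟨fun f g => by simp [inner_neg_left, inner_neg_right, hJ.1], fun f => by simp [hJ.2]⟩

theorem indef_neg (J : H →L[ℂ] H) (f g : H) : indef (-J) f g = -indef J f g := by
  simp [indef, inner_neg_left]

theorem isMaxNeg_iff_isMaxPos_neg {M : Submodule ℂ H} : IsMaxNeg J M ↔ IsMaxPos (-J) M := by
  have hneg : ∀ M' : Submodule ℂ H, IsNeg J M' ↔ IsPos (-J) M' := fun M' => by
    simp [IsNeg, IsPos, indef_neg]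
  simp only [IsMaxNeg, IsMaxPos, hneg]

theorem isFrameOn_neg_iff {F : ℕ → H} {S : Set ℕ} {A B : ℝ} :
    IsFrameOn (-J) F S A B ↔ IsFrameOn J F S A B := by
  simp only [IsFrameOn, indef_neg, norm_neg, Complex.neg_re, abs_neg]

theorem notMem_Npos_iff {F : ℕ → H} {n : ℕ} : n ∉ Npos J F ↔ n ∈ Nneg J F :=
  not_le (α := ℝ)

theorem notMem_Nneg_iff {F : ℕ → H} {n : ℕ} : n ∉ Nneg J F ↔ n ∈ Npos J F :=
  not_lt (α := ℝ)

theorem re_indef_self_of_apply_eq {x : H} (hx : J x = x) : (indef J x x).re = ‖x‖ ^ 2 := by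
  rw [indef, hx, ← RCLike.re_to_complex, inner_self_eq_norm_sq]

theorem re_indef_self_of_apply_eq_neg {x : H} (hx : J x = -x) : (indef J x x).re = -‖x‖ ^ 2 := by
  rw [indef, hx, inner_neg_left, Complex.neg_re, ← RCLike.re_to_complex, inner_self_eq_norm_sq]

theorem apply_eq_self_of_re_indef_nonneg {x : H} (hx : J x = x ∨ J x = -x)
    (h : 0 ≤ (indef J x x).re) : J x = x := by
  rcases hx with hx | hx
  · exact hx
  · rw [re_indef_self_of_apply_eq_neg hx, neg_nonneg] at h
    rw [hx, norm_eq_zero.1 (pow_eq_zero_iff two_ne_zero |>.1 (le_antisymm h (sq_nonneg _))),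
      neg_zero]

theorem apply_eq_neg_of_re_indef_neg {x : H} (hx : J x = x ∨ J x = -x)
    (h : (indef J x x).re < 0) : J x = -x := by
  rcases hx with hx | hx
  · rw [re_indef_self_of_apply_eq hx] at h
    exact absurd h (not_lt.2 (sq_nonneg _))
  · exact hx

theorem IsFundSym.inner_eq_zero_of_apply_eq (hJ : IsFundSym J) {x y : H} (hx : J x = x)
    (hy : J y = -y) : ⟪x, y⟫ = 0 := by
  refine self_eq_neg.1 ?_
  conv_lhs => rw [← hx]
  rw [hJ.1, hy, inner_neg_right]

def posProj (J : H →L[ℂ] H) : H →L[ℂ] H := (1 / 2 : ℂ) • (ContinuousLinearMap.id ℂ H + J)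

theorem posProj_apply (f : H) : posProj J f = (1 / 2 : ℂ) • (f + J f) := rfl

theorem IsFundSym.apply_posProj (hJ : IsFundSym J) (f : H) : J (posProj J f) = posProj J f := by
  rw [posProj_apply, map_smul, map_add, hJ.2, add_comm]

theorem posProj_of_apply_eq {x : H} (hx : J x = x) : posProj J x = x := by
  rw [posProj_apply, hx]
  module

theorem posProj_of_apply_eq_neg {x : H} (hx : J x = -x) : posProj J x = 0 := by
  rw [posProj_apply, hx, add_neg_cancel, smul_zero]

theorem mem_closure_span_image {v : ℕ → H} {S : Set ℕ}
    (hS : ∀ n ∈ S, J (v n) = v n) (hSc : ∀ n ∉ S, J (v n) = -v n)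
    (hv : Dense (Submodule.span ℂ (Set.range v) : Set H)) {w : H} (hw : J w = w) :
    w ∈ closure (Submodule.span ℂ (v '' S) : Set H) := by
  have hPv : ∀ n, posProj J (v n) ∈ Submodule.span ℂ (v '' S) := fun n => by
    by_cases hn : n ∈ S
    · rw [posProj_of_apply_eq (hS n hn)]
      exact Submodule.subset_span ⟨n, hn, rfl⟩
    · rw [posProj_of_apply_eq_neg (hSc n hn)]
      exact zero_mem _
  rw [← posProj_of_apply_eq hw]
  exact map_mem_closure_span _ (Set.forall_mem_range.2 hPv) (hv w)

variable {T : H →L[ℂ] H}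

theorem apply_eq_neg_of_anticomm (hTJ : ∀ w, T (J w) = -J (T w)) {w : H} (hw : J w = w) :
    J (T w) = -T w := by
  rw [← neg_eq_iff_eq_neg, ← hTJ, hw]

theorem re_indef_graph (hTJ : ∀ w, T (J w) = -J (T w)) {w : H} (hw : J w = w) :
    (indef J (w - T w) (w - T w)).re = ‖w‖ ^ 2 - ‖T w‖ ^ 2 := by
  rw [indef, map_sub, hw, apply_eq_neg_of_anticomm hTJ hw, sub_neg_eq_add, re_inner_add_sub]

theorem IsFundSym.isClosed_graph (hJ : IsFundSym J) (hTJ : ∀ w, T (J w) = -J (T w)) :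
    IsClosed {f : H | ∃ w, J w = w ∧ f = w - T w} := by
  have hgraph : {f : H | ∃ w, J w = w ∧ f = w - T w} =
      {f | f = posProj J f - T (posProj J f)} := by
    ext f
    constructor
    · rintro ⟨w, hw, rfl⟩
      have hPw : posProj J (w - T w) = w := by
        rw [map_sub, posProj_of_apply_eq hw,
          posProj_of_apply_eq_neg (apply_eq_neg_of_anticomm hTJ hw), sub_zero]
      change _ = posProj J _ - T (posProj J _)
      rw [hPw]
    · intro hf
      exact ⟨posProj J f, hJ.apply_posProj f, hf⟩
  rw [hgraph]
  exact isClosed_eq continuous_id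
    ((posProj J).continuous.sub (T.continuous.comp (posProj J).continuous))

theorem IsFundSym.isMaxPos_of_graph (hJ : IsFundSym J) (hTJ : ∀ w, T (J w) = -J (T w))
    (hT : ∀ w, w ≠ 0 → ‖T w‖ < ‖w‖) {M : Submodule ℂ H} (hM : IsClosed (M : Set H))
    (hMgraph : ∀ f ∈ M, ∃ w, J w = w ∧ f = w - T w)
    (hgraphM : ∀ w, J w = w → w - T w ∈ M) : IsMaxPos J M := by
  refine ⟨⟨hM, fun f hf hf0 => ?_⟩, fun M' hM' hMM' => le_antisymm (fun f hf => ?_) hMM'⟩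
  · obtain ⟨w, hw, rfl⟩ := hMgraph f hf
    have hw0 : w ≠ 0 := by rintro rfl; simp at hf0
    rw [re_indef_graph hTJ hw, sub_pos]
    exact pow_lt_pow_left₀ (hT w hw0) (norm_nonneg _) two_ne_zero
  · set w := posProj J f
    have hw : J w = w := hJ.apply_posProj f
    have hJz : J (f - (w - T w)) = -(f - (w - T w)) := by
      rw [map_sub, map_sub, hw, apply_eq_neg_of_anticomm hTJ hw]
      simp only [w, posProj_apply]
      module
    have hz : f - (w - T w) = 0 := by
      by_contra hz
      have hpos := hM'.2 _ (M'.sub_mem hf (hMM' (hgraphM w hw))) hz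
      rw [re_indef_self_of_apply_eq_neg hJz] at hpos
      nlinarith [sq_nonneg ‖f - (w - T w)‖]
    rw [sub_eq_zero.mp hz]
    exact hgraphM w hw

end FundSym

/-- `Ep = e^{Q/2}` and `Em = e^{-Q/2}` on a common domain, for a self-adjoint `Q`
anticommuting with `J`. -/
structure IsExpPair (J : H →L[ℂ] H) {dom : Submodule ℂ H} (Ep Em : dom →ₗ[ℂ] H) : Prop where
  ep_symm : ∀ x y : dom, ⟪Ep x, (y : H)⟫ = ⟪(x : H), Ep y⟫
  em_mem : ∀ x : dom, Em x ∈ dom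
  ep_em : ∀ x : dom, Ep ⟨Em x, em_mem x⟩ = x
  apply_mem : ∀ x : dom, J x ∈ dom
  ep_apply : ∀ x : dom, Ep ⟨J x, apply_mem x⟩ = J (Em x)

section ExpPair

variable {J : H →L[ℂ] H} {dom : Submodule ℂ H} {Ep Em : dom →ₗ[ℂ] H}

def coshOp (Ep Em : dom →ₗ[ℂ] H) : dom →ₗ[ℂ] H := (1 / 2 : ℂ) • (Ep + Em)

def sinhOp (Ep Em : dom →ₗ[ℂ] H) : dom →ₗ[ℂ] H := (1 / 2 : ℂ) • (Ep - Em)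

theorem coshOp_apply (u : dom) : coshOp Ep Em u = (1 / 2 : ℂ) • (Ep u + Em u) := rfl

theorem sinhOp_apply (u : dom) : sinhOp Ep Em u = (1 / 2 : ℂ) • (Ep u - Em u) := rfl

theorem coshOp_sub_sinhOp (u : dom) : coshOp Ep Em u - sinhOp Ep Em u = Em u := by
  rw [coshOp_apply, sinhOp_apply]
  module

namespace IsExpPair

theorem inner_ep_em (hQ : IsExpPair J Ep Em) (x y : dom) : ⟪Ep x, Em y⟫ = ⟪(x : H), y⟫ := by
  rw [hQ.ep_symm x ⟨Em y, hQ.em_mem y⟩, hQ.ep_em]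

theorem em_symm (hQ : IsExpPair J Ep Em) (x y : dom) : ⟪Em x, (y : H)⟫ = ⟪(x : H), Em y⟫ := by
  conv_lhs => rw [← hQ.ep_em y, ← hQ.ep_symm ⟨Em x, hQ.em_mem x⟩, hQ.ep_em]

theorem coshOp_symm (hQ : IsExpPair J Ep Em) (x y : dom) :
    ⟪coshOp Ep Em x, (y : H)⟫ = ⟪(x : H), coshOp Ep Em y⟫ := by
  rw [coshOp_apply, coshOp_apply, inner_smul_left, inner_smul_right, inner_add_left,
    inner_add_right, hQ.ep_symm, hQ.em_symm]
  congr 1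
  simp [map_ofNat]

theorem norm_coshOp_sq (hQ : IsExpPair J Ep Em) (u : dom) :
    ‖coshOp Ep Em u‖ ^ 2 = ‖(u : H)‖ ^ 2 + ‖sinhOp Ep Em u‖ ^ 2 := by
  have hre : RCLike.re ⟪Ep u, Em u⟫ = ‖(u : H)‖ ^ 2 := by
    rw [hQ.inner_ep_em, inner_self_eq_norm_sq]
  rw [coshOp_apply, sinhOp_apply, norm_smul, norm_smul, mul_pow, mul_pow, norm_add_sq (𝕜 := ℂ),
    norm_sub_sq (𝕜 := ℂ), hre]
  norm_num
  ring

theorem norm_sinhOp_le (hQ : IsExpPair J Ep Em) (u : dom) :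
    ‖sinhOp Ep Em u‖ ≤ ‖coshOp Ep Em u‖ :=
  (pow_le_pow_iff_left₀ (norm_nonneg _) (norm_nonneg _) two_ne_zero).1 <| by
    rw [hQ.norm_coshOp_sq]
    linarith [sq_nonneg ‖(u : H)‖]

theorem norm_le_norm_coshOp (hQ : IsExpPair J Ep Em) (u : dom) :
    ‖(u : H)‖ ≤ ‖coshOp Ep Em u‖ :=
  (pow_le_pow_iff_left₀ (norm_nonneg _) (norm_nonneg _) two_ne_zero).1 <| by
    rw [hQ.norm_coshOp_sq]
    linarith [sq_nonneg ‖sinhOp Ep Em u‖]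

theorem em_apply (hJ : IsFundSym J) (hQ : IsExpPair J Ep Em) (x : dom) :
    Em ⟨J x, hQ.apply_mem x⟩ = J (Ep x) := by
  have h := hQ.ep_apply ⟨J x, hQ.apply_mem x⟩
  have hx : (⟨J (J x), hQ.apply_mem ⟨J x, hQ.apply_mem x⟩⟩ : dom) = x := Subtype.ext (hJ.2 x)
  rw [hx] at h
  rw [h, hJ.2]

theorem coshOp_apply_mem (hJ : IsFundSym J) (hQ : IsExpPair J Ep Em) (x : dom) :
    coshOp Ep Em ⟨J x, hQ.apply_mem x⟩ = J (coshOp Ep Em x) := by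
  rw [coshOp_apply, coshOp_apply, hQ.ep_apply, hQ.em_apply hJ, map_smul, map_add, add_comm]

theorem sinhOp_apply_mem (hJ : IsFundSym J) (hQ : IsExpPair J Ep Em) (x : dom) :
    sinhOp Ep Em ⟨J x, hQ.apply_mem x⟩ = -J (sinhOp Ep Em x) := by
  rw [sinhOp_apply, sinhOp_apply, hQ.ep_apply, hQ.em_apply hJ, map_smul, map_sub, ← smul_neg,
    neg_sub]

theorem apply_coshOp_of_apply_eq (hJ : IsFundSym J) (hQ : IsExpPair J Ep Em) {u : dom}
    (hu : J u = u) : J (coshOp Ep Em u) = coshOp Ep Em u := by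
  rw [← hQ.coshOp_apply_mem hJ]
  congr 1
  exact Subtype.ext hu

theorem apply_coshOp_of_apply_eq_neg (hJ : IsFundSym J) (hQ : IsExpPair J Ep Em) {u : dom}
    (hu : J u = -(u : H)) : J (coshOp Ep Em u) = -coshOp Ep Em u := by
  rw [← hQ.coshOp_apply_mem hJ, ← map_neg]
  congr 1
  exact Subtype.ext hu

theorem indef_em (hQ : IsExpPair J Ep Em) (x y : dom) :
    indef J (Em x) (Em y) = ⟪J x, (y : H)⟫ := by
  rw [indef, ← hQ.ep_apply, hQ.inner_ep_em]

theorem neg (hQ : IsExpPair J Ep Em) : IsExpPair (-J) Ep Em where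
  ep_symm := hQ.ep_symm
  em_mem := hQ.em_mem
  ep_em := hQ.ep_em
  apply_mem x := by simpa using dom.neg_mem (hQ.apply_mem x)
  ep_apply x := by
    have hx : ∀ h, (⟨(-J) x, h⟩ : dom) = -⟨J x, hQ.apply_mem x⟩ := fun _ => Subtype.ext (by simp)
    rw [hx, map_neg, hQ.ep_apply]
    rfl

end IsExpPair

end ExpPair

section Tanh

variable [CompleteSpace H] {J : H →L[ℂ] H} {dom : Submodule ℂ H} {Ep Em : dom →ₗ[ℂ] H}

def tanhOp (Ep Em : dom →ₗ[ℂ] H) : H →L[ℂ] H := (sinhOp Ep Em).extendOfNorm (coshOp Ep Em)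

def sechOp (Ep Em : dom →ₗ[ℂ] H) : H →L[ℂ] H := dom.subtype.extendOfNorm (coshOp Ep Em)

namespace IsExpPair

theorem tanhOp_coshOp (hQ : IsExpPair J Ep Em) (hC : DenseRange (coshOp Ep Em)) (u : dom) :
    tanhOp Ep Em (coshOp Ep Em u) = sinhOp Ep Em u :=
  LinearMap.extendOfNorm_eq hC ⟨1, fun v => by simpa using hQ.norm_sinhOp_le v⟩ u

theorem sechOp_coshOp (hQ : IsExpPair J Ep Em) (hC : DenseRange (coshOp Ep Em)) (u : dom) :
    sechOp Ep Em (coshOp Ep Em u) = u :=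
  LinearMap.extendOfNorm_eq hC ⟨1, fun v => by simpa using hQ.norm_le_norm_coshOp v⟩ u

theorem norm_tanhOp_sq_add_norm_sechOp_sq (hQ : IsExpPair J Ep Em)
    (hC : DenseRange (coshOp Ep Em)) (w : H) :
    ‖tanhOp Ep Em w‖ ^ 2 + ‖sechOp Ep Em w‖ ^ 2 = ‖w‖ ^ 2 :=
  hC.induction_on w (isClosed_eq (by fun_prop) (by fun_prop)) fun u => by
    rw [hQ.tanhOp_coshOp hC, hQ.sechOp_coshOp hC, hQ.norm_coshOp_sq, add_comm]

theorem tanhOp_apply (hJ : IsFundSym J) (hQ : IsExpPair J Ep Em)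
    (hC : DenseRange (coshOp Ep Em)) (w : H) : tanhOp Ep Em (J w) = -J (tanhOp Ep Em w) :=
  hC.induction_on w (isClosed_eq (by fun_prop) (by fun_prop)) fun u => by
    rw [← hQ.coshOp_apply_mem hJ, hQ.tanhOp_coshOp hC, hQ.tanhOp_coshOp hC,
      hQ.sinhOp_apply_mem hJ]

theorem inner_sechOp_coshOp (hQ : IsExpPair J Ep Em) (hC : DenseRange (coshOp Ep Em))
    (w : H) (v : dom) : ⟪sechOp Ep Em w, coshOp Ep Em v⟫ = ⟪w, (v : H)⟫ :=
  hC.induction_on w (isClosed_eq (by fun_prop) (by fun_prop)) fun u => by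
    rw [hQ.sechOp_coshOp hC, hQ.coshOp_symm]

theorem sechOp_injective (hQ : IsExpPair J Ep Em) (hdom : Dense (dom : Set H))
    (hC : DenseRange (coshOp Ep Em)) : Function.Injective (sechOp Ep Em) :=
  (injective_iff_map_eq_zero _).2 fun w hw => hdom.eq_zero_of_inner_left ℂ fun v hv => by
    rw [← hQ.inner_sechOp_coshOp hC w ⟨v, hv⟩, hw, inner_zero_left]

theorem norm_tanhOp_lt (hQ : IsExpPair J Ep Em) (hdom : Dense (dom : Set H))
    (hC : DenseRange (coshOp Ep Em)) {w : H} (hw : w ≠ 0) : ‖tanhOp Ep Em w‖ < ‖w‖ := by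
  have hR : sechOp Ep Em w ≠ 0 :=
    fun h => hw (hQ.sechOp_injective hdom hC (h.trans (map_zero _).symm))
  refine (pow_lt_pow_iff_left₀ (norm_nonneg _) (norm_nonneg _) two_ne_zero).1 ?_
  rw [← hQ.norm_tanhOp_sq_add_norm_sechOp_sq hC w, lt_add_iff_pos_right]
  positivity

end IsExpPair

end Tanh

section Family

variable {J : H →L[ℂ] H} {dom : Submodule ℂ H} {Ep Em : dom →ₗ[ℂ] H} {g : ℕ → dom} {S : Set ℕ}

theorem exists_eq_em_of_mem_span (hS : ∀ n ∈ S, J (g n) = g n) {f : H}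
    (hf : f ∈ Submodule.span ℂ ((fun n => Em (g n)) '' S)) : ∃ u : dom, J u = u ∧ f = Em u := by
  rw [← Set.image_image Em g S, Submodule.span_image] at hf
  obtain ⟨u, hu, rfl⟩ := hf
  refine ⟨u, ?_, rfl⟩
  induction hu using Submodule.span_induction with
  | mem x hx =>
    obtain ⟨n, hn, rfl⟩ := hx
    exact hS n hn
  | zero => simp
  | add x y _ _ hx hy => simp [hx, hy]
  | smul c x _ hx => simp [hx]

namespace IsExpPair

theorem apply_eq_self_of_mem_Npos (hQ : IsExpPair J Ep Em)
    (heig : ∀ n, J (g n) = g n ∨ J (g n) = -(g n)) {n : ℕ}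
    (hn : n ∈ Npos J fun n => Em (g n)) : J (g n) = g n :=
  apply_eq_self_of_re_indef_nonneg (heig n) (by rw [indef, ← hQ.indef_em]; exact hn)

theorem apply_eq_neg_of_mem_Nneg (hQ : IsExpPair J Ep Em)
    (heig : ∀ n, J (g n) = g n ∨ J (g n) = -(g n)) {n : ℕ}
    (hn : n ∈ Nneg J fun n => Em (g n)) : J (g n) = -(g n) :=
  apply_eq_neg_of_re_indef_neg (heig n) (by rw [indef, ← hQ.indef_em]; exact hn)

theorem isFrameOn (hJ : IsFundSym J) (hQ : IsExpPair J Ep Em) {A B : ℝ}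
    (hframe : ∀ f : H, A * ‖f‖ ^ 2 ≤ ∑' n, ‖⟪f, (g n : H)⟫‖ ^ 2 ∧
      ∑' n, ‖⟪f, (g n : H)⟫‖ ^ 2 ≤ B * ‖f‖ ^ 2)
    (hS : ∀ n ∈ S, J (g n) = g n) (hSc : ∀ n ∉ S, J (g n) = -(g n)) :
    IsFrameOn J (fun n => Em (g n)) S A B := by
  intro f hf
  obtain ⟨u, hu, rfl⟩ := exists_eq_em_of_mem_span hS hf
  have hterm : ∀ n, indef J (Em u) (Em (g n)) = ⟪(u : H), g n⟫ := fun n => by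
    rw [hQ.indef_em, hu]
  have hself : |(indef J (Em u) (Em u)).re| = ‖(u : H)‖ ^ 2 := by
    rw [hQ.indef_em, ← indef, re_indef_self_of_apply_eq hu, abs_sq]
  have hsum : ∑' n : S, ‖indef J (Em u) (Em (g n))‖ ^ 2 = ∑' n, ‖⟪(u : H), g n⟫‖ ^ 2 := by
    simp only [hterm]
    refine tsum_subtype_eq_of_support_subset (f := fun n => ‖⟪(u : H), g n⟫‖ ^ 2) fun n hn => ?_
    by_contra hnS
    exact hn (by simp [hJ.inner_eq_zero_of_apply_eq hu (hSc n hnS)])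
  rw [hself, hsum]
  exact hframe u

end IsExpPair

end Family

section MaxPos

variable [CompleteSpace H] {J : H →L[ℂ] H} {dom : Submodule ℂ H} {Ep Em : dom →ₗ[ℂ] H}
  {g : ℕ → dom} {S : Set ℕ}

theorem IsExpPair.isMaxPos_closure_span (hJ : IsFundSym J) (hQ : IsExpPair J Ep Em)
    (hdom : Dense (dom : Set H)) (hS : ∀ n ∈ S, J (g n) = g n)
    (hSc : ∀ n ∉ S, J (g n) = -(g n))
    (hcomplete : Dense (Submodule.span ℂ (Set.range fun n => coshOp Ep Em (g n)) : Set H)) :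
    IsMaxPos J (Submodule.span ℂ ((fun n => Em (g n)) '' S)).topologicalClosure := by
  have hC : DenseRange (coshOp Ep Em) := denseRange_of_dense_span_range _ hcomplete
  have hTJ := hQ.tanhOp_apply hJ hC
  have hgraph : ∀ u : dom, coshOp Ep Em u - tanhOp Ep Em (coshOp Ep Em u) = Em u := fun u => by
    rw [hQ.tanhOp_coshOp hC, coshOp_sub_sinhOp]
  refine hJ.isMaxPos_of_graph hTJ (fun w => hQ.norm_tanhOp_lt hdom hC)
    (Submodule.isClosed_topologicalClosure _) (fun f hf => ?_) (fun w hw => ?_)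
  · refine closure_minimal (fun f hf => ?_) (hJ.isClosed_graph hTJ) hf
    obtain ⟨u, hu, rfl⟩ := exists_eq_em_of_mem_span hS hf
    refine ⟨coshOp Ep Em u, ?_, (hgraph u).symm⟩
    exact hQ.apply_coshOp_of_apply_eq hJ hu
  · have hw' := mem_closure_span_image (v := fun n => coshOp Ep Em (g n))
      (fun n hn => hQ.apply_coshOp_of_apply_eq hJ (hS n hn))
      (fun n hn => hQ.apply_coshOp_of_apply_eq_neg hJ (hSc n hn)) hcomplete hw
    refine map_mem_closure_span (ContinuousLinearMap.id ℂ H - tanhOp Ep Em) ?_ hw'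
    rintro _ ⟨n, hn, rfl⟩
    change coshOp Ep Em (g n) - tanhOp Ep Em (coshOp Ep Em (g n)) ∈ _
    rw [hgraph]
    exact Submodule.subset_span ⟨n, hn, rfl⟩

end MaxPos

variable [CompleteSpace H]

theorem stmt9_general (J : H →L[ℂ] H) (hJ : IsFundSym J)
    (G : ℕ → H) (A B : ℝ) (hA : 0 < A) (hAB : A ≤ B)
    (hGframe : ∀ f : H,
      A * ‖f‖ ^ 2 ≤ ∑' n : ℕ, ‖⟪f, G n⟫‖ ^ 2 ∧
      ∑' n : ℕ, ‖⟪f, G n⟫‖ ^ 2 ≤ B * ‖f‖ ^ 2)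
    (heig : ∀ n : ℕ, J (G n) = G n ∨ J (G n) = -(G n))
    (dom : Submodule ℂ H) (hdom : Dense (dom : Set H))
    (Ep Em : ↥dom →ₗ[ℂ] H)
    (hEpsym : ∀ x y : ↥dom, ⟪Ep x, (y : H)⟫ = ⟪(x : H), Ep y⟫)
    (hinv₂ : ∀ x : ↥dom, ∃ h : Em x ∈ dom, Ep ⟨Em x, h⟩ = (x : H))
    (hswap : ∀ x : ↥dom, ∃ h : J (x : H) ∈ dom, Ep ⟨J (x : H), h⟩ = J (Em x))
    (hGdom : ∀ n : ℕ, G n ∈ dom)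
    (hcomplete : Dense
      (↑(Submodule.span ℂ (Set.range fun n : ℕ =>
        ((1:ℂ)/2) • (Ep ⟨G n, hGdom n⟩ + Em ⟨G n, hGdom n⟩))) : Set H)) :
    ∃ A' B' : ℝ, IsJFrame J (fun n : ℕ => Em ⟨G n, hGdom n⟩) A' B' := by
  have hQ : IsExpPair J Ep Em := ⟨hEpsym, fun x => (hinv₂ x).1, fun x => (hinv₂ x).2,
    fun x => (hswap x).1, fun x => (hswap x).2⟩
  let g : ℕ → dom := fun n => ⟨G n, hGdom n⟩
  have hpos : ∀ n ∈ Npos J fun n => Em (g n), J (g n) = g n :=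
    fun _ => hQ.apply_eq_self_of_mem_Npos heig
  have hneg : ∀ n ∈ Nneg J fun n => Em (g n), J (g n) = -(g n) :=
    fun _ => hQ.apply_eq_neg_of_mem_Nneg heig
  have hnotpos : ∀ n ∉ Npos J fun n => Em (g n), J (g n) = -(g n) :=
    fun n hn => hneg n (notMem_Npos_iff.1 hn)
  have hnotneg : ∀ n ∉ Nneg J fun n => Em (g n), (-J) (g n) = -(g n) :=
    fun n hn => by simp [hpos n (notMem_Nneg_iff.1 hn)]
  have hnegJ : ∀ n ∈ Nneg J fun n => Em (g n), (-J) (g n) = g n :=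
    fun n hn => by simp [hneg n hn]
  refine ⟨A, B, hA, hAB, hQ.isMaxPos_closure_span hJ hdom hpos hnotpos hcomplete,
    isMaxNeg_iff_isMaxPos_neg.2 (hQ.neg.isMaxPos_closure_span hJ.neg hdom hnegJ hnotneg hcomplete),
    hQ.isFrameOn hJ hGframe hpos hnotpos, ?_⟩
  exact isFrameOn_neg_iff.1 (hQ.neg.isFrameOn hJ.neg hGframe hnegJ hnotneg)

/-- Proposition, converse construction: if `{gₙ}` is a frame in
`(H, (·,·))` with each `gₙ` in `H₊` or `H₋` (the eigenspaces of `J`), and `Q`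
is a self-adjoint operator anticommuting with `J` (encoded by the pair
`Ep = e^{Q/2}`, `Em = e^{-Q/2}` of symmetric positive mutually inverse
operators intertwined by `J`: `Ep (J x) = J (Em x)`), each `gₙ` lies in the
domain of `cosh(Q/2) = ½(Ep + Em)` and `{cosh(Q/2) gₙ}` is complete in `H`,
then `{e^{-Q/2} gₙ}` is a `J`-frame. -/
theorem stmt9 (J : H →L[ℂ] H) (hJ : IsFundSym J)
    (G : ℕ → H) (A B : ℝ) (hA : 0 < A) (hAB : A ≤ B)
    (hGframe : ∀ f : H,
      A * ‖f‖ ^ 2 ≤ ∑' n : ℕ, ‖⟪f, G n⟫‖ ^ 2 ∧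
      ∑' n : ℕ, ‖⟪f, G n⟫‖ ^ 2 ≤ B * ‖f‖ ^ 2)
    (heig : ∀ n : ℕ, J (G n) = G n ∨ J (G n) = -(G n))
    (dom : Submodule ℂ H) (hdom : Dense (dom : Set H))
    (Ep Em : ↥dom →ₗ[ℂ] H)
    (hEpsym : ∀ x y : ↥dom, ⟪Ep x, (y : H)⟫ = ⟪(x : H), Ep y⟫)
    (hEmsym : ∀ x y : ↥dom, ⟪Em x, (y : H)⟫ = ⟪(x : H), Em y⟫)
    (hEppos : ∀ x : ↥dom, x ≠ 0 → 0 < (⟪(x : H), Ep x⟫).re)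
    (hEmpos : ∀ x : ↥dom, x ≠ 0 → 0 < (⟪(x : H), Em x⟫).re)
    (hinv₁ : ∀ x : ↥dom, ∃ h : Ep x ∈ dom, Em ⟨Ep x, h⟩ = (x : H))
    (hinv₂ : ∀ x : ↥dom, ∃ h : Em x ∈ dom, Ep ⟨Em x, h⟩ = (x : H))
    (hswap : ∀ x : ↥dom, ∃ h : J (x : H) ∈ dom, Ep ⟨J (x : H), h⟩ = J (Em x))
    (hGdom : ∀ n : ℕ, G n ∈ dom)
    (hcomplete : Dense
      (↑(Submodule.span ℂ (Set.range fun n : ℕ =>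
        ((1:ℂ)/2) • (Ep ⟨G n, hGdom n⟩ + Em ⟨G n, hGdom n⟩))) : Set H)) :
    ∃ A' B' : ℝ, IsJFrame J (fun n : ℕ => Em ⟨G n, hGdom n⟩) A' B' :=
  stmt9_general J hJ G A B hA hAB hGframe heig dom hdom Ep Em hEpsym hinv₂ hswap hGdom hcomplete

end KreinStmt
end
end

section
/- Let F = {f_n} be an exact J-frame in a Krein space (H, [·,·]) with D = M₊ ∔ M₋ ≠ H. Then the subfamilies F± = {f_n}_{n∈N±} are exact sequences (minimal and complete) in the subspaces (M±, (·,·)) of the Hilbert space H. -/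
/-!
On `M₊` and on `M₋` the norm of `Ĥ` is dominated by that of `H`: there `‖f‖₁² = |[f,f]| ≤ ‖J‖ ‖f‖²`.
Hence the embedding `D → Ĥ` is continuous on each of these closed subspaces, so a vector of `F₊`
lying in the closed span of the other vectors of `F₊` would, after embedding, lie in the closed
span of the other vectors of `F` in `Ĥ`, contradicting the minimality of `F` there. Completeness
of `F±` in `M±` holds because `M±` are the closed spans of `F±`.
-/

noncomputable section
open Filter Topology

namespace KreinStmt

local notation "⟪" x ", " y "⟫" => @inner ℂ _ _ x y

variable {H : Type} [NormedAddCommGroup H] [InnerProductSpace ℂ H] [CompleteSpace H]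

section ClosedSpan

open Submodule

variable {R E G ι : Type*} [Ring R]

theorem continuousOn_of_norm_le [SeminormedAddCommGroup E] [Module R E]
    [SeminormedAddCommGroup G] [Module R G] (g : E →ₗ[R] G) (M : Submodule R E) {C : ℝ}
    (hg : ∀ x ∈ M, ‖g x‖ ≤ C * ‖x‖) : ContinuousOn g M := by
  refine (LipschitzOnWith.of_dist_le_mul (K := C.toNNReal) fun x hx y hy => ?_).continuousOn
  rw [dist_eq_norm, dist_eq_norm, ← map_sub]
  exact (hg _ (M.sub_mem hx hy)).trans
    (mul_le_mul_of_nonneg_right C.le_coe_toNNReal (norm_nonneg _))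

theorem mem_closure_span_image_of_continuousOn [AddCommGroup E] [Module R E] [TopologicalSpace E]
    [AddCommGroup G] [Module R G] [TopologicalSpace G] (g : E →ₗ[R] G) {M : Submodule R E}
    (hM : IsClosed (M : Set E)) (hg : ContinuousOn g M) {s : Set E} (hs : s ⊆ M) {x : E}
    (hx : x ∈ closure (span R s : Set E)) : g x ∈ closure (span R (g '' s) : Set G) := by
  have hsub : closure (span R s : Set E) ⊆ M := hM.closure_subset_iff.mpr (span_le.mpr hs)
  have := (hg.mono hsub).image_closure ⟨x, hx, rfl⟩
  rwa [← map_coe, map_span] at this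

theorem mem_closure_span_subtype [AddCommGroup E] [Module R E] [TopologicalSpace E]
    {D : Submodule R E} {v : ι → E} (hv : ∀ i, v i ∈ D) {S : Set ι} {m : ι}
    (h : v m ∈ closure (span R (v '' S) : Set E)) :
    (⟨v m, hv m⟩ : D) ∈ closure (span R ((fun i => (⟨v i, hv i⟩ : D)) '' S) : Set D) := by
  rw [closure_subtype]
  convert h using 2
  rw [← D.coe_subtype, ← map_coe, map_span, ← Set.image_comp]
  rfl

theorem notMem_closure_span_of_map_notMem [SeminormedAddCommGroup E] [Module R E]
    [SeminormedAddCommGroup G] [Module R G] (g : E →ₗ[R] G) {M : Submodule R E}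
    (hM : IsClosed (M : Set E)) {C : ℝ} (hg : ∀ x ∈ M, ‖g x‖ ≤ C * ‖x‖) {v : ι → E}
    {S T : Set ι} (hvS : ∀ i ∈ S, v i ∈ M) (hST : S ⊆ T) {m : ι}
    (hm : g (v m) ∉ closure (span R ((g ∘ v) '' T) : Set G)) :
    v m ∉ closure (span R (v '' S) : Set E) := by
  intro hx
  refine hm (closure_mono (span_mono ?_) (mem_closure_span_image_of_continuousOn g hM
    (continuousOn_of_norm_le g M hg) (Set.image_subset_iff.mpr hvS) hx))
  rw [← Set.image_comp]
  exact Set.image_mono hST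

end ClosedSpan

section Completion

open Submodule

omit [CompleteSpace H]

theorem abs_re_indef_le (J : H →L[ℂ] H) (f : H) : |(indef J f f).re| ≤ ‖J‖ * ‖f‖ ^ 2 :=
  calc |(indef J f f).re| ≤ ‖indef J f f‖ := Complex.abs_re_le_norm _
    _ ≤ ‖J f‖ * ‖f‖ := norm_inner_le_norm _ _
    _ ≤ ‖J‖ * ‖f‖ * ‖f‖ := by gcongr; exact J.le_opNorm f
    _ = ‖J‖ * ‖f‖ ^ 2 := by ring

variable {K : Type} [NormedAddCommGroup K] [InnerProductSpace ℂ K] {J : H →L[ℂ] H}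
  {Mp Mn : Submodule ℂ H} {P : ↥(Mp ⊔ Mn) →ₗ[ℂ] H} {ι : ↥(Mp ⊔ Mn) →ₗ[ℂ] K}

theorem proj_eq_self (hdis : Mp ⊓ Mn = ⊥) (hP : ∀ x, P x ∈ Mp ∧ (x : H) - P x ∈ Mn)
    {x : ↥(Mp ⊔ Mn)} (hx : (x : H) ∈ Mp) : P x = x := by
  have hmem : (x : H) - P x ∈ Mp ⊓ Mn := ⟨Mp.sub_mem hx (hP x).1, (hP x).2⟩
  rw [hdis, Submodule.mem_bot ℂ, sub_eq_zero] at hmem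
  exact hmem.symm

theorem proj_eq_zero (hdis : Mp ⊓ Mn = ⊥) (hP : ∀ x, P x ∈ Mp ∧ (x : H) - P x ∈ Mn)
    {x : ↥(Mp ⊔ Mn)} (hx : (x : H) ∈ Mn) : P x = 0 := by
  have hmem : P x ∈ Mp ⊓ Mn := ⟨(hP x).1, by simpa using Mn.sub_mem hx (hP x).2⟩
  rwa [hdis, Submodule.mem_bot ℂ] at hmem

theorem norm_le_of_mem_or_mem (hdis : Mp ⊓ Mn = ⊥) (hP : ∀ x, P x ∈ Mp ∧ (x : H) - P x ∈ Mn)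
    (hι : ∀ x y, ⟪ι x, ι y⟫ = indef J (P x) (P y) - indef J ((x : H) - P x) ((y : H) - P y))
    {x : ↥(Mp ⊔ Mn)} (hx : (x : H) ∈ Mp ∨ (x : H) ∈ Mn) : ‖ι x‖ ≤ √‖J‖ * ‖x‖ := by
  have hsq : ‖ι x‖ ^ 2 ≤ |(indef J x x).re| := by
    rw [← inner_self_eq_norm_sq (𝕜 := ℂ), hι]
    rcases hx with hx | hx
    · rw [proj_eq_self hdis hP hx, sub_self]
      simpa [indef] using le_abs_self _
    · rw [proj_eq_zero hdis hP hx, sub_zero]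
      simpa [indef] using neg_le_abs _
  refine (pow_le_pow_iff_left₀ (norm_nonneg _) (by positivity) two_ne_zero).mp ?_
  rw [mul_pow, Real.sq_sqrt (norm_nonneg _)]
  exact hsq.trans (abs_re_indef_le J x)

theorem notMem_closure_span_of_notMem_closure_span_image (hdis : Mp ⊓ Mn = ⊥)
    (hP : ∀ x, P x ∈ Mp ∧ (x : H) - P x ∈ Mn)
    (hι : ∀ x y, ⟪ι x, ι y⟫ = indef J (P x) (P y) - indef J ((x : H) - P x) ((y : H) - P y))
    {F : ℕ → H} (hFD : ∀ n, F n ∈ Mp ⊔ Mn) {N : Set ℕ}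
    (hN : (span ℂ (F '' N)).topologicalClosure = Mp ∨ (span ℂ (F '' N)).topologicalClosure = Mn)
    {m : ℕ}
    (hm : ι ⟨F m, hFD m⟩ ∉ closure (span ℂ ((fun n => ι ⟨F n, hFD n⟩) '' {n | n ≠ m}) : Set K)) :
    F m ∉ closure (span ℂ (F '' {n ∈ N | n ≠ m}) : Set H) := by
  have hMD : IsClosed
      ((span ℂ (F '' N)).topologicalClosure.comap (Mp ⊔ Mn).subtype : Set ↥(Mp ⊔ Mn)) :=
    (span ℂ (F '' N)).isClosed_topologicalClosure.preimage continuous_subtype_val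
  refine fun hcl => notMem_closure_span_of_map_notMem ι hMD
    (fun x hx => norm_le_of_mem_or_mem hdis hP hι
      (hN.imp (fun h => h.le (mem_comap.mp hx)) (fun h => h.le (mem_comap.mp hx))))
    (v := fun n => ⟨F n, hFD n⟩) (fun n hn => ?_) (fun n hn => hn.2) hm
    (mem_closure_span_subtype hFD hcl)
  exact le_topologicalClosure _ (subset_span ⟨n, hn.1, rfl⟩)

end Completion

theorem stmt11_general {K : Type} [NormedAddCommGroup K] [InnerProductSpace ℂ K]
    (J : H →L[ℂ] H)
    (F : ℕ → H)
    (hdis : Mpos J F ⊓ Mneg J F = ⊥)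
    (ι : ↥(Mpos J F ⊔ Mneg J F) →ₗ[ℂ] K)
    (P : ↥(Mpos J F ⊔ Mneg J F) →ₗ[ℂ] H)
    (hP : ∀ x : ↥(Mpos J F ⊔ Mneg J F), P x ∈ Mpos J F ∧ (x : H) - P x ∈ Mneg J F)
    (hι : ∀ x y : ↥(Mpos J F ⊔ Mneg J F),
      ⟪ι x, ι y⟫ = indef J (P x) (P y) - indef J ((x : H) - P x) ((y : H) - P y))
    (hFD : ∀ n : ℕ, F n ∈ Mpos J F ⊔ Mneg J F)
    (hminK : ∀ m : ℕ, ι ⟨F m, hFD m⟩ ∉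
      closure (↑(Submodule.span ℂ
        ((fun n : ℕ => ι ⟨F n, hFD n⟩) '' {n | n ≠ m})) : Set K)) :
    -- minimality of `F₊` in `M₊` and of `F₋` in `M₋`
    (∀ m ∈ Npos J F, F m ∉
      closure (↑(Submodule.span ℂ (F '' {n ∈ Npos J F | n ≠ m})) : Set H)) ∧
    (∀ m ∈ Nneg J F, F m ∉
      closure (↑(Submodule.span ℂ (F '' {n ∈ Nneg J F | n ≠ m})) : Set H)) ∧
    -- completeness of `F±` in `M±`
    (Submodule.span ℂ (F '' Npos J F)).topologicalClosure = Mpos J F ∧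
    (Submodule.span ℂ (F '' Nneg J F)).topologicalClosure = Mneg J F :=
  ⟨fun m _ => notMem_closure_span_of_notMem_closure_span_image hdis hP hι hFD (.inl rfl) (hminK m),
    fun m _ => notMem_closure_span_of_notMem_closure_span_image hdis hP hι hFD (.inr rfl) (hminK m),
    rfl, rfl⟩

/-- exact `J`-frames, case `D ≠ H`: if the `J`-frame `F` is exact
(a frame in the completion `Ĥ = K` which is minimal there), then the
subfamilies `F± = {fₙ}_{n ∈ N±}` are exact sequences (minimal and complete) in
the subspaces `(M±, (·,·))` of the Hilbert space `H`. -/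
theorem stmt11 {K : Type} [NormedAddCommGroup K] [InnerProductSpace ℂ K]
    [CompleteSpace K]
    (J : H →L[ℂ] H) (hJ : IsFundSym J)
    (F : ℕ → H) (A B : ℝ) (hF : IsJFrame J F A B)
    (hne : Mpos J F ⊔ Mneg J F ≠ ⊤) (hdis : Mpos J F ⊓ Mneg J F = ⊥)
    (ι : ↥(Mpos J F ⊔ Mneg J F) →ₗ[ℂ] K) (hdense : DenseRange ι)
    (P : ↥(Mpos J F ⊔ Mneg J F) →ₗ[ℂ] H)
    (hP : ∀ x : ↥(Mpos J F ⊔ Mneg J F), P x ∈ Mpos J F ∧ (x : H) - P x ∈ Mneg J F)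
    (hι : ∀ x y : ↥(Mpos J F ⊔ Mneg J F),
      ⟪ι x, ι y⟫ = indef J (P x) (P y) - indef J ((x : H) - P x) ((y : H) - P y))
    (hFD : ∀ n : ℕ, F n ∈ Mpos J F ⊔ Mneg J F)
    -- `F` is an exact frame in `Ĥ = K` : a frame which is a minimal sequence
    (hframe : ∀ g : K,
      A * ‖g‖ ^ 2 ≤ ∑' n : ℕ, ‖⟪g, ι ⟨F n, hFD n⟩⟫‖ ^ 2 ∧
      ∑' n : ℕ, ‖⟪g, ι ⟨F n, hFD n⟩⟫‖ ^ 2 ≤ B * ‖g‖ ^ 2)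
    (hminK : ∀ m : ℕ, ι ⟨F m, hFD m⟩ ∉
      closure (↑(Submodule.span ℂ
        ((fun n : ℕ => ι ⟨F n, hFD n⟩) '' {n | n ≠ m})) : Set K)) :
    -- minimality of `F₊` in `M₊` and of `F₋` in `M₋`
    (∀ m ∈ Npos J F, F m ∉
      closure (↑(Submodule.span ℂ (F '' {n ∈ Npos J F | n ≠ m})) : Set H)) ∧
    (∀ m ∈ Nneg J F, F m ∉
      closure (↑(Submodule.span ℂ (F '' {n ∈ Nneg J F | n ≠ m})) : Set H)) ∧
    -- completeness of `F±` in `M±`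
    (Submodule.span ℂ (F '' Npos J F)).topologicalClosure = Mpos J F ∧
    (Submodule.span ℂ (F '' Nneg J F)).topologicalClosure = Mneg J F :=
  stmt11_general J F hdis ι P hP hι hFD hminK

end KreinStmt
end
end
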